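/- Let zⁿ, z^{n-1}, z̃ ∈ ℝ^n, rⁿ, r^{n+1} ∈ ℝ, g ∈ ℝ^n, Δt > 0, S skew-adjoint, L symmetric. Suppose z^{n+1}, r^{n+1} satisfy (z^{n+1}-zⁿ)/Δt = S(L((zⁿ+z^{n+1})/2) + ((rⁿ+r^{n+1})/2) • g) and (r^{n+1}-rⁿ)/Δt = (1/2)⟪g, (z^{n+1}-zⁿ)/Δt⟫. Then (1/2)⟪z^{n+1}, L z^{n+1}⟫ + (r^{n+1})^2 = (1/2)⟪zⁿ, L zⁿ⟫ + (rⁿ)^2. -/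

import Mathlib

open scoped RealInnerProductSpace

/-!
Set `d = z^{n+1} - zⁿ` and let `w` be the argument of `S` in the update of `z`. Since `d` is a
nonzero multiple of `S w` and `S` is skew-adjoint, `⟪d, w⟫ = 0`. Symmetry of `L` turns
`⟪d, L((zⁿ + z^{n+1})/2)⟫` into the increment of `½⟪z, L z⟫`, and the update of `r` turns
`(rⁿ + r^{n+1})/2 · ⟪g, d⟫` into the increment of `r²`.
-/

section

variable {E : Type*} [NormedAddCommGroup E] [InnerProductSpace ℝ E]

theorem inner_apply_self_eq_zero_of_skew {S : E → E} (hS : ∀ x y, ⟪S x, y⟫ = -⟪x, S y⟫)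
    (x : E) : ⟪S x, x⟫ = 0 := by
  have h := hS x x
  rw [real_inner_comm x] at h ⊢
  linarith

theorem inner_eq_zero_of_smul_eq_skew {S : E → E} (hS : ∀ x y, ⟪S x, y⟫ = -⟪x, S y⟫)
    {c : ℝ} (hc : c ≠ 0) {d w : E} (h : c • d = S w) : ⟪d, w⟫ = 0 := by
  have hcd : c * ⟪d, w⟫ = 0 := by
    rw [← real_inner_smul_left, h, inner_apply_self_eq_zero_of_skew hS]
  exact (mul_eq_zero.mp hcd).resolve_left hc

theorem inner_sub_apply_midpoint_of_symm {F : Type*} [FunLike F E E] [LinearMapClass F ℝ E E]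
    {L : F} (hL : ∀ x y, ⟪L x, y⟫ = ⟪x, L y⟫)
    (z₀ z₁ : E) :
    ⟪z₁ - z₀, L ((1 / 2 : ℝ) • (z₀ + z₁))⟫ = (1 / 2 : ℝ) * (⟪z₁, L z₁⟫ - ⟪z₀, L z₀⟫) := by
  have hcross : ⟪z₁, L z₀⟫ = ⟪z₀, L z₁⟫ := by rw [real_inner_comm, hL]
  rw [map_smul, real_inner_smul_right, map_add, inner_add_right, inner_sub_left,
    inner_sub_left, hcross]
  ring

end

/-- Discrete modified-energy conservation of the SAV-CN scheme. -/
theorem stmt4 {n : ℕ}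
    (S L : EuclideanSpace ℝ (Fin n) →L[ℝ] EuclideanSpace ℝ (Fin n))
    (hS : ∀ x y, ⟪S x, y⟫ = -⟪x, S y⟫)
    (hL : ∀ x y, ⟪L x, y⟫ = ⟪x, L y⟫)
    (zn zn1 g : EuclideanSpace ℝ (Fin n)) (rn rn1 Δt : ℝ) (hΔt : 0 < Δt)
    (hupdz : (Δt)⁻¹ • (zn1 - zn)
      = S (L ((1 / 2 : ℝ) • (zn + zn1)) + ((rn + rn1) / 2) • g))
    (hupdr : (rn1 - rn) / Δt = (1 / 2 : ℝ) * ⟪g, (Δt)⁻¹ • (zn1 - zn)⟫) :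
    (1 / 2 : ℝ) * ⟪zn1, L zn1⟫ + rn1 ^ 2 = (1 / 2 : ℝ) * ⟪zn, L zn⟫ + rn ^ 2 := by
  have horth := inner_eq_zero_of_smul_eq_skew hS (inv_ne_zero hΔt.ne') hupdz
  have hg : ⟪g, zn1 - zn⟫ = 2 * (rn1 - rn) := by
    rw [real_inner_smul_right] at hupdr
    field_simp at hupdr
    linarith
  rw [inner_add_right, inner_sub_apply_midpoint_of_symm hL,
    real_inner_smul_right, real_inner_comm g, hg] at horth
  linear_combination horth
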